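/- For every object X of the idempotent completion Karoubi C, the triangle (X, X, 0; 1_X, 0, 0) belongs to the class Θ̃. -/

import Mathlib

open CategoryTheory CategoryTheory.Limits CategoryTheory.Pretriangulated
  CategoryTheory.Idempotents ZeroObject

variable (C : Type*) [Category C] [Preadditive C] [HasZeroObject C] [HasFiniteBiproducts C]
  [HasShift C ℤ] [∀ n : ℤ, (shiftFunctor C n).Additive] [Pretriangulated C]

/-- The shift on the idempotent completion `Karoubi C` induced by the shift on `C`:
`(A, e)⟦n⟧ = (A⟦n⟧, e⟦n⟧)`. -/
noncomputable instance karoubiHasShift : HasShift (Karoubi C) ℤ :=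
  HasShift.induced (toKaroubi C) ℤ
    (fun n => (functorExtension₂ C C).obj (shiftFunctor C n))
    (fun n => (functorExtension₂CompWhiskeringLeftToKaroubiIso C C).app (shiftFunctor C n))

/-- The functor `toKaroubi C` commutes with the shifts. -/
noncomputable instance toKaroubiCommShift : (toKaroubi C).CommShift ℤ :=
  Functor.CommShift.ofInduced (toKaroubi C) ℤ
    (fun n => (functorExtension₂ C C).obj (shiftFunctor C n))
    (fun n => (functorExtension₂CompWhiskeringLeftToKaroubiIso C C).app (shiftFunctor C n))

noncomputable instance karoubiShiftAdditive (n : ℤ) :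
    (shiftFunctor (Karoubi C) n).Additive := by
  change ((functorExtension₂ C C).obj (shiftFunctor C n)).Additive
  constructor
  intro X Y f g
  ext
  first
    | (simp; done)
    | (simp; rfl)
    | (simp; congr 1)
    | (simp; exact Subsingleton.elim _ _)

noncomputable instance : HasBinaryBiproducts (Karoubi C) :=
  hasBinaryBiproducts_of_finite_biproducts _

variable {C}

/-- The direct sum of two triangles: the triangle on the biproducts of the corresponding
objects, with the componentwise maps. -/
noncomputable def triangleSum {D : Type*} [Category D] [Preadditive D] [HasBinaryBiproducts D]
    [HasShift D ℤ] (T T' : Triangle D) : Triangle D :=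
  Triangle.mk (biprod.map T.mor₁ T'.mor₁) (biprod.map T.mor₂ T'.mor₂)
    (biprod.desc (T.mor₃ ≫ (biprod.inl : T.obj₁ ⟶ T.obj₁ ⊞ T'.obj₁)⟦(1:ℤ)⟧')
      (T'.mor₃ ≫ (biprod.inr : T'.obj₁ ⟶ T.obj₁ ⊞ T'.obj₁)⟦(1:ℤ)⟧'))

variable (C)

/-- The class `Θ̃` of triangles of `Karoubi C`: a triangle `T` belongs to `Θ̃` if there is a
triangle `T'` of `Karoubi C` such that `T ⊕ T'` is isomorphic to the image under
`(toKaroubi C).mapTriangle` of a distinguished triangle of `C`. -/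
noncomputable def thetaTilde : Set (Triangle (Karoubi C)) :=
  {T | ∃ (T' : Triangle (Karoubi C)) (S : Triangle C),
    (S ∈ distTriang C) ∧ Nonempty (triangleSum T T' ≅ (toKaroubi C).mapTriangle.obj S)}

/-! A formal summand `X` of `Karoubi C` has a complement with `X ⊞ X.complement ≅ X.X`, and the
sum of the contractible triangles on `X` and on `X.complement` is the contractible triangle on
`X ⊞ X.complement`, hence isomorphic to the image of the contractible (so distinguished)
triangle on `X.X`. -/

noncomputable def triangleSumContractibleIso {D : Type*} [Category D] [Preadditive D]
    [HasZeroObject D] [HasBinaryBiproducts D] [HasShift D ℤ] (A B : D) :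
    triangleSum (contractibleTriangle A) (contractibleTriangle B) ≅
      contractibleTriangle (A ⊞ B) :=
  have hzero : IsZero ((0 : D) ⊞ (0 : D)) :=
    (biprod_isZero_iff _ _).2 ⟨isZero_zero D, isZero_zero D⟩
  Triangle.isoMk _ _ (Iso.refl (A ⊞ B)) (Iso.refl (A ⊞ B)) (hzero.iso (isZero_zero D))
    (by change biprod.map (𝟙 A) (𝟙 B) ≫ 𝟙 _ = 𝟙 _ ≫ 𝟙 _; ext <;> simp)
    ((isZero_zero D).eq_of_tgt _ _) (hzero.eq_of_src _ _)

noncomputable def CategoryTheory.Functor.mapContractibleTriangleIso {D E : Type*} [Category D]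
    [Category E] [HasZeroObject D] [HasZeroObject E] [HasZeroMorphisms D] [HasZeroMorphisms E]
    [HasShift D ℤ] [HasShift E ℤ] (F : D ⥤ E) [F.CommShift ℤ] [F.PreservesZeroMorphisms]
    (X : D) :
    F.mapTriangle.obj (contractibleTriangle X) ≅ contractibleTriangle (F.obj X) :=
  Triangle.isoMk _ _ (Iso.refl (F.obj X)) (Iso.refl (F.obj X)) F.mapZeroObject
    (by change F.map (𝟙 X) ≫ 𝟙 _ = 𝟙 _ ≫ 𝟙 _; simp)
    ((isZero_zero E).eq_of_tgt _ _) ((F.map_isZero (isZero_zero D)).eq_of_src _ _)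

/-- For every object `X` of `Karoubi C`, the triangle `(X, X, 0; 𝟙 X, 0, 0)` belongs to the
class `Θ̃`. -/
theorem stmt10 (X : Karoubi C) :
    Triangle.mk (𝟙 X) (0 : X ⟶ (0 : Karoubi C)) (0 : (0 : Karoubi C) ⟶ X⟦(1:ℤ)⟧) ∈
      thetaTilde C :=
  ⟨contractibleTriangle X.complement, contractibleTriangle X.X, contractible_distinguished X.X,
    ⟨triangleSumContractibleIso X X.complement ≪≫
      (contractibleTriangleFunctor _).mapIso X.decomposition ≪≫
      ((toKaroubi C).mapContractibleTriangleIso X.X).symm⟩⟩
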